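/- arXiv:2110.09348 — 2 statements merged into one kernel-verified Lean document; each statement's English description precedes it below -/
import Mathlib

section
/- Let W, U, S, V : ℝ → Matrix (Fin n) (Fin n) ℝ be differentiable functions such that for all t: W(t) = U(t) S(t) V(t)ᵀ, U(t) and V(t) are orthogonal, and S(t) is diagonal. Then for every index k and every t, the derivative of the k-th diagonal entry of S satisfies (S'(t))_{kk} = ( U(t)ᵀ W'(t) V(t) )_{kk}; i.e., writing σ^k(t) := S(t)_{kk} and u^k(t), v^k(t) for the k-th columns of U(t), V(t), one has σ̇^k = (u^k)ᵀ Ẇ v^k. -/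
/-!
Conjugating the SVD gives `S = Uᵀ W V`, so by the product rule
`Ṡ = U̇ᵀ W V + Uᵀ Ẇ V + Uᵀ W V̇ = (U̇ᵀ U) S + Uᵀ Ẇ V + S (Vᵀ V̇)`.
Differentiating `UᵀU = 1` shows that `U̇ᵀ U` is skew-symmetric, so its diagonal vanishes, and
likewise for `Vᵀ V̇`; since `S` is diagonal, the first and last terms have zero diagonal.
-/

open Matrix

namespace Matrix

variable {l m n : Type*} [Fintype m]

/-- Matrices carry no canonical norm in Mathlib, so derivatives of matrix paths are taken
entrywise. -/
def HasEntrywiseDerivAt (A : ℝ → Matrix l n ℝ) (A' : Matrix l n ℝ) (t : ℝ) : Prop :=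
  ∀ i j, HasDerivAt (fun s => A s i j) (A' i j) t

namespace HasEntrywiseDerivAt

variable {t : ℝ}

theorem transpose {A : ℝ → Matrix l n ℝ} {A' : Matrix l n ℝ}
    (hA : HasEntrywiseDerivAt A A' t) :
    HasEntrywiseDerivAt (fun s => (A s)ᵀ) A'ᵀ t :=
  fun i j => hA j i

theorem mul {A : ℝ → Matrix l m ℝ} {B : ℝ → Matrix m n ℝ} {A' : Matrix l m ℝ}
    {B' : Matrix m n ℝ} (hA : HasEntrywiseDerivAt A A' t) (hB : HasEntrywiseDerivAt B B' t) :
    HasEntrywiseDerivAt (fun s => A s * B s) (A' * B t + A t * B') t := by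
  intro i j
  simp only [add_apply, mul_apply, ← Finset.sum_add_distrib]
  exact HasDerivAt.fun_sum fun k _ => (hA i k).mul (hB k j)

theorem unique {A : ℝ → Matrix l n ℝ} {A' A'' : Matrix l n ℝ}
    (hA' : HasEntrywiseDerivAt A A' t) (hA'' : HasEntrywiseDerivAt A A'' t) : A' = A'' :=
  ext fun i j => (hA' i j).unique (hA'' i j)

end HasEntrywiseDerivAt

theorem transpose_mul_deriv_diag_eq_zero [DecidableEq n] {U : ℝ → Matrix m n ℝ}
    {U' : Matrix m n ℝ} {t : ℝ} (hU : HasEntrywiseDerivAt U U' t)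
    (hUorth : ∀ s, (U s)ᵀ * U s = 1) (k : n) : ((U t)ᵀ * U') k k = 0 := by
  have hconst : HasEntrywiseDerivAt (fun s => (U s)ᵀ * U s) 0 t := by
    simp only [hUorth]
    exact fun i j => hasDerivAt_const t _
  have hderiv_diag := congrFun (congrFun (hconst.unique (hU.transpose.mul hU)) k) k
  have hsymm : (U'ᵀ * U t) k k = ((U t)ᵀ * U') k k := by
    rw [← transpose_apply (U'ᵀ * U t), transpose_mul, transpose_transpose]
  rw [zero_apply, add_apply, hsymm] at hderiv_diag
  linarith

theorem deriv_transpose_mul_diag_eq_zero [DecidableEq n] {U : ℝ → Matrix m n ℝ}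
    {U' : Matrix m n ℝ} {t : ℝ} (hU : HasEntrywiseDerivAt U U' t)
    (hUorth : ∀ s, (U s)ᵀ * U s = 1) (k : n) : (U'ᵀ * U t) k k = 0 := by
  rw [← transpose_apply (U'ᵀ * U t), transpose_mul, transpose_transpose,
    transpose_mul_deriv_diag_eq_zero hU hUorth]

theorem IsDiag.mul_apply_diag_right {α : Type*} [NonUnitalNonAssocSemiring α] [Fintype n]
    [DecidableEq n] {D : Matrix n n α} (hD : D.IsDiag) (A : Matrix n n α) (k : n) :
    (A * D) k k = A k k * D k k := by
  rw [← hD.diagonal_diag, mul_diagonal, diagonal_apply_eq, diag_apply]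

theorem IsDiag.mul_apply_diag_left {α : Type*} [NonUnitalNonAssocSemiring α] [Fintype n]
    [DecidableEq n] {D : Matrix n n α} (hD : D.IsDiag) (A : Matrix n n α) (k : n) :
    (D * A) k k = D k k * A k k := by
  rw [← hD.diagonal_diag, diagonal_mul, diagonal_apply_eq, diag_apply]

end Matrix

/-- **Dynamics of singular values along a differentiable SVD path.**
If `W t = U t * S t * (V t)ᵀ` with `U t, V t` orthogonal and `S t` diagonal
for all `t`, all entrywise differentiable, then the diagonal entries of `S`
(the signed singular values `σ^k = S_{kk}`) satisfy
`σ̇^k = (u^k)ᵀ Ẇ v^k`, i.e. `(S')_{kk} = (Uᵀ W' V)_{kk}`. -/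
theorem singular_value_dynamics (n : ℕ)
    (W U S V W' U' S' V' : ℝ → Matrix (Fin n) (Fin n) ℝ)
    (hW : ∀ t i j, HasDerivAt (fun s => W s i j) (W' t i j) t)
    (hU : ∀ t i j, HasDerivAt (fun s => U s i j) (U' t i j) t)
    (hS : ∀ t i j, HasDerivAt (fun s => S s i j) (S' t i j) t)
    (hV : ∀ t i j, HasDerivAt (fun s => V s i j) (V' t i j) t)
    (hSVD : ∀ t, W t = U t * S t * (V t)ᵀ)
    (hUorth : ∀ t, (U t)ᵀ * U t = 1)
    (hVorth : ∀ t, (V t)ᵀ * V t = 1)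
    (hSdiag : ∀ t k k', k ≠ k' → S t k k' = 0) :
    ∀ t k, S' t k k = ((U t)ᵀ * W' t * V t) k k := by
  intro t k
  have hU_deriv : HasEntrywiseDerivAt U (U' t) t := hU t
  have hS_deriv : HasEntrywiseDerivAt S (S' t) t := hS t
  have hS_diag : (S t).IsDiag := hSdiag t
  have hWV : ∀ s, W s * V s = U s * S s := fun s => by
    rw [hSVD, Matrix.mul_assoc, hVorth, Matrix.mul_one]
  have hUW : (U t)ᵀ * W t = S t * (V t)ᵀ := by
    rw [hSVD, ← Matrix.mul_assoc, ← Matrix.mul_assoc, hUorth, Matrix.one_mul]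
  have hS_eq : S = fun s => (U s)ᵀ * W s * V s := funext fun s => by
    rw [Matrix.mul_assoc, hWV, ← Matrix.mul_assoc, hUorth, Matrix.one_mul]
  have hS' : S' t = ((U' t)ᵀ * W t + (U t)ᵀ * W' t) * V t + (U t)ᵀ * W t * V' t :=
    hS_deriv.unique <| hS_eq ▸ (hU_deriv.transpose.mul (hW t)).mul (hV t)
  have hfirst : (U' t)ᵀ * W t * V t = (U' t)ᵀ * U t * S t := by
    rw [Matrix.mul_assoc, hWV, Matrix.mul_assoc]
  have hlast : (U t)ᵀ * W t * V' t = S t * ((V t)ᵀ * V' t) := by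
    rw [hUW, Matrix.mul_assoc]
  rw [hS', add_mul, hfirst, hlast, Matrix.add_apply, Matrix.add_apply,
    hS_diag.mul_apply_diag_right, hS_diag.mul_apply_diag_left,
    deriv_transpose_mul_diag_eq_zero hU_deriv hUorth,
    transpose_mul_deriv_diag_eq_zero (hV t) hVorth]
  ring
end

section
/- Let N ≥ 2, let x_i, x_i' ∈ ℝ^n for i ∈ Fin N, and define L : Matrix (Fin m) (Fin n) ℝ → ℝ as the InfoNCE loss of the embeddings z_i(W) := W *ᵥ x_i and z_i'(W) := W *ᵥ x_i': L(W) = −Σ_i log( exp(−‖z_i−z_i'‖²/2) / Z_i ), Z_i = Σ_{j≠i} exp(−‖z_i−z_j‖²/2) + exp(−‖z_i−z_i'‖²/2). Then L is differentiable, and its gradient with respect to the Frobenius inner product satisfies ∇L(W) = −W * ( Σ̂₀(W) − Σ̂₁(W) ), where, with α_{ij}(W) := exp(−‖z_i−z_j‖²/2)/Z_i for j ≠ i and α_{ii}(W) := exp(−‖z_i−z_i'‖²/2)/Z_i, Σ̂₀(W) := Σ_i Σ_{j≠i} α_{ji}(W)(x_i − x_j)(x_i − x_j)ᵀ and Σ̂₁(W)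 := Σ_i (1 − α_{ii}(W))(x_i' − x_i)(x_i' − x_i)ᵀ. In particular, the gradient flow Ẇ = −∇L(W) takes the form Ẇ = W X(W) with X(W) = Σ̂₀(W) − Σ̂₁(W) a difference of two positive semidefinite matrices. -/
/-!
Each summand of the loss is `log Z_i - log k(x_i - x_i')`, where the Gaussian kernel
`k(u)(W) = exp (-‖W u‖² / 2)` has gradient `-k(u)(W) • W u uᵀ`. The chain rule therefore gives
the gradient `W (∑ i, (1 - α_ii) d_i d_iᵀ - ∑ i, ∑ j ≠ i, α_ij d_ij d_ijᵀ)` with `d_i = x_i - x_i'`,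
`d_ij = x_i - x_j`; exchanging `i` and `j` in the double sum (`d_ji d_jiᵀ = d_ij d_ijᵀ`) turns this
into `W (Σ̂₁ - Σ̂₀)`. Both covariances are nonnegative combinations of rank-one matrices `u uᵀ`,
because `α ≥ 0` and `α_ii ≤ 1`, hence positive semidefinite.
-/

open Matrix Finset

attribute [local instance] Matrix.frobeniusNormedAddCommGroup Matrix.frobeniusNormedSpace

theorem Matrix.sum_smul_vecMulVec_single {m n : Type*} [Fintype m] [DecidableEq m] (c : m → ℝ)
    (u : n → ℝ) :
    ∑ a, c a • vecMulVec (Pi.single a 1) u = vecMulVec c u := by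
  ext i j
  simp [Matrix.sum_apply, vecMulVec_apply, Pi.single_apply]

theorem Matrix.vecMulVec_sub_self_comm {n : Type*} (a b : n → ℝ) :
    vecMulVec (a - b) (a - b) = vecMulVec (b - a) (b - a) := by
  rw [← neg_sub b a, neg_vecMulVec, vecMulVec_neg, neg_neg]

section MatrixGradient

variable {m n : Type*} [Fintype m] [Fintype n]

noncomputable def frobeniusInner : Matrix m n ℝ →ₗ[ℝ] Matrix m n ℝ →L[ℝ] ℝ where
  toFun G := LinearMap.toContinuousLinearMap
    { toFun := fun H => trace (Gᵀ * H)
      map_add' := fun H H' => by simp [Matrix.mul_add]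
      map_smul' := fun c H => by simp }
  map_add' G G' := ContinuousLinearMap.ext fun H => by simp [Matrix.add_mul]
  map_smul' c G := ContinuousLinearMap.ext fun H => by simp

theorem frobeniusInner_apply (G H : Matrix m n ℝ) : frobeniusInner G H = trace (Gᵀ * H) := rfl

theorem frobeniusInner_vecMulVec_single [DecidableEq m] (a : m) (u : n → ℝ) (V : Matrix m n ℝ) :
    frobeniusInner (vecMulVec (Pi.single a 1) u) V = (V *ᵥ u) a := by
  rw [frobeniusInner_apply, transpose_vecMulVec, vecMulVec_mul, trace_vecMulVec, dotProduct_comm,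
    ← dotProduct_mulVec, single_dotProduct, one_mul]

/-- Derivatives are tracked through their gradient matrices: algebra on the continuous linear
maps themselves would mix the product topology of `Matrix` (used by `fderiv` in the theorem) with
the Frobenius normed structure (required by the calculus lemmas), which agree only up to unfolding
instances, so `rw` and `simp` fail on such terms. -/
def HasMatrixGradientAt (f : Matrix m n ℝ → ℝ) (G W : Matrix m n ℝ) : Prop :=
  HasFDerivAt f (frobeniusInner G) W

variable {f g : Matrix m n ℝ → ℝ} {G G' W : Matrix m n ℝ}

theorem HasMatrixGradientAt.fderiv_apply (hf : HasMatrixGradientAt f G W) (H : Matrix m n ℝ) :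
    fderiv ℝ f W H = trace (Gᵀ * H) := by
  rw [HasFDerivAt.fderiv hf, frobeniusInner_apply]

theorem HasMatrixGradientAt.differentiableAt (hf : HasMatrixGradientAt f G W) :
    DifferentiableAt ℝ f W :=
  HasFDerivAt.differentiableAt hf

theorem hasMatrixGradientAt_frobeniusInner (G W : Matrix m n ℝ) :
    HasMatrixGradientAt (frobeniusInner G) G W :=
  (frobeniusInner G).hasFDerivAt

theorem HasMatrixGradientAt.add (hf : HasMatrixGradientAt f G W) (hg : HasMatrixGradientAt g G' W) :
    HasMatrixGradientAt (fun V => f V + g V) (G + G') W := by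
  unfold HasMatrixGradientAt at *
  rw [map_add]
  exact hf.add hg

theorem HasMatrixGradientAt.sub (hf : HasMatrixGradientAt f G W) (hg : HasMatrixGradientAt g G' W) :
    HasMatrixGradientAt (fun V => f V - g V) (G - G') W := by
  unfold HasMatrixGradientAt at *
  rw [map_sub]
  exact hf.sub hg

theorem HasMatrixGradientAt.neg (hf : HasMatrixGradientAt f G W) :
    HasMatrixGradientAt (fun V => -f V) (-G) W := by
  unfold HasMatrixGradientAt at *
  rw [map_neg]
  exact hf.neg

theorem HasMatrixGradientAt.div_const (hf : HasMatrixGradientAt f G W) (c : ℝ) :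
    HasMatrixGradientAt (fun V => f V / c) (c⁻¹ • G) W := by
  unfold HasMatrixGradientAt at *
  simp only [map_smul, div_eq_mul_inv]
  exact hf.mul_const c⁻¹

theorem HasMatrixGradientAt.sum {ι : Type*} {s : Finset ι} {f : ι → Matrix m n ℝ → ℝ}
    {G : ι → Matrix m n ℝ} (hf : ∀ i ∈ s, HasMatrixGradientAt (f i) (G i) W) :
    HasMatrixGradientAt (fun V => ∑ i ∈ s, f i V) (∑ i ∈ s, G i) W := by
  unfold HasMatrixGradientAt at *
  rw [map_sum]
  exact HasFDerivAt.fun_sum hf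

theorem HasMatrixGradientAt.pow (hf : HasMatrixGradientAt f G W) (k : ℕ) :
    HasMatrixGradientAt (fun V => f V ^ k) ((k * f W ^ (k - 1)) • G) W := by
  unfold HasMatrixGradientAt at *
  rw [map_smul, ← nsmul_eq_mul]
  exact hf.pow k

theorem HasMatrixGradientAt.exp (hf : HasMatrixGradientAt f G W) :
    HasMatrixGradientAt (fun V => Real.exp (f V)) (Real.exp (f W) • G) W := by
  unfold HasMatrixGradientAt at *
  rw [map_smul]
  exact hf.exp

theorem HasMatrixGradientAt.log (hf : HasMatrixGradientAt f G W) (hW : f W ≠ 0) :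
    HasMatrixGradientAt (fun V => Real.log (f V)) ((f W)⁻¹ • G) W := by
  unfold HasMatrixGradientAt at *
  rw [map_smul]
  exact hf.log hW

theorem hasMatrixGradientAt_sum_mulVec_sq (u : n → ℝ) (W : Matrix m n ℝ) :
    HasMatrixGradientAt (fun V => ∑ a, (V *ᵥ u) a ^ 2) ((2 : ℝ) • (W * vecMulVec u u)) W := by
  classical
  have hcoord (a : m) :
      HasMatrixGradientAt (fun V => (V *ᵥ u) a) (vecMulVec (Pi.single a 1) u) W := by
    convert hasMatrixGradientAt_frobeniusInner (vecMulVec (Pi.single a 1) u) W using 1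
    exact funext fun V => (frobeniusInner_vecMulVec_single a u V).symm
  convert HasMatrixGradientAt.sum fun a _ => (hcoord a).pow 2 using 1
  simp only [Nat.cast_ofNat, Nat.add_one_sub_one, pow_one, mul_smul, ← Finset.smul_sum,
    sum_smul_vecMulVec_single, mul_vecMulVec]

end MatrixGradient

section InfoNCE

variable {m n : Type*} [Fintype m] [Fintype n]

noncomputable def gaussKernel (u : n → ℝ) (W : Matrix m n ℝ) : ℝ :=
  Real.exp (-(∑ a, (W *ᵥ u) a ^ 2) / 2)

theorem gaussKernel_sub (u v : n → ℝ) (W : Matrix m n ℝ) :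
    gaussKernel (u - v) W = Real.exp (-(∑ a, ((W *ᵥ u) a - (W *ᵥ v) a) ^ 2) / 2) := by
  simp only [gaussKernel, mulVec_sub, Pi.sub_apply]

theorem hasMatrixGradientAt_gaussKernel (u : n → ℝ) (W : Matrix m n ℝ) :
    HasMatrixGradientAt (gaussKernel u) (-gaussKernel u W • (W * vecMulVec u u)) W := by
  convert ((hasMatrixGradientAt_sum_mulVec_sq u W).neg.div_const 2).exp using 1
  · rfl
  · rw [smul_neg, smul_smul, inv_mul_cancel₀ two_ne_zero, one_smul, smul_neg, ← neg_smul]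
    rfl

noncomputable def gaussPartition {κ : Type*} (s : Finset κ) (u : κ → n → ℝ) (p : n → ℝ)
    (W : Matrix m n ℝ) : ℝ :=
  ∑ j ∈ s, gaussKernel (u j) W + gaussKernel p W

theorem gaussKernel_pos (u : n → ℝ) (W : Matrix m n ℝ) : 0 < gaussKernel u W := Real.exp_pos _

theorem gaussKernel_le_gaussPartition {κ : Type*} (s : Finset κ) (u : κ → n → ℝ) (p : n → ℝ)
    (W : Matrix m n ℝ) : gaussKernel p W ≤ gaussPartition s u p W :=
  le_add_of_nonneg_left (Finset.sum_nonneg fun j _ => (gaussKernel_pos (u j) W).le)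

theorem gaussPartition_pos {κ : Type*} (s : Finset κ) (u : κ → n → ℝ) (p : n → ℝ)
    (W : Matrix m n ℝ) : 0 < gaussPartition s u p W :=
  (gaussKernel_pos p W).trans_le (gaussKernel_le_gaussPartition s u p W)

theorem hasMatrixGradientAt_gaussPartition {κ : Type*} (s : Finset κ) (u : κ → n → ℝ) (p : n → ℝ)
    (W : Matrix m n ℝ) :
    HasMatrixGradientAt (gaussPartition s u p)
      (∑ j ∈ s, -gaussKernel (u j) W • (W * vecMulVec (u j) (u j)) +
        -gaussKernel p W • (W * vecMulVec p p)) W :=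
  (HasMatrixGradientAt.sum fun j _ => hasMatrixGradientAt_gaussKernel (u j) W).add
    (hasMatrixGradientAt_gaussKernel p W)

theorem hasMatrixGradientAt_neg_log_gaussKernel_div_gaussPartition {κ : Type*} (s : Finset κ)
    (u : κ → n → ℝ) (p : n → ℝ) (W : Matrix m n ℝ) :
    HasMatrixGradientAt
      (fun V : Matrix m n ℝ => -Real.log (gaussKernel p V / gaussPartition s u p V))
      (W * ((1 - gaussKernel p W / gaussPartition s u p W) • vecMulVec p p -
        ∑ j ∈ s, (gaussKernel (u j) W / gaussPartition s u p W) • vecMulVec (u j) (u j))) W := by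
  have hsplit : (fun V : Matrix m n ℝ => -Real.log (gaussKernel p V / gaussPartition s u p V)) =
      fun V => Real.log (gaussPartition s u p V) - Real.log (gaussKernel p V) := by
    funext V
    rw [Real.log_div (gaussKernel_pos p V).ne' (gaussPartition_pos s u p V).ne', neg_sub]
  rw [hsplit]
  convert ((hasMatrixGradientAt_gaussPartition s u p W).log (gaussPartition_pos s u p W).ne').sub
    ((hasMatrixGradientAt_gaussKernel p W).log (gaussKernel_pos p W).ne') using 1
  simp only [Matrix.mul_sub, Matrix.mul_smul, Matrix.mul_sum, smul_add, Finset.smul_sum, smul_smul,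
    neg_smul, smul_neg, Finset.sum_neg_distrib, inv_mul_cancel₀ (gaussKernel_pos p W).ne', sub_smul,
    one_smul, div_eq_inv_mul]
  abel

theorem Matrix.posSemidef_smul_vecMulVec_self {c : ℝ} (hc : 0 ≤ c) (u : n → ℝ) :
    (c • vecMulVec u u).PosSemidef := by
  simpa using (posSemidef_vecMulVec_self_star u).smul hc

variable {ι : Type*} [Fintype ι] [DecidableEq ι]

theorem Finset.sum_sum_erase_comm {M : Type*} [AddCommMonoid M] (f : ι → ι → M) :
    ∑ i, ∑ j ∈ univ.erase i, f i j = ∑ i, ∑ j ∈ univ.erase i, f j i :=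
  Finset.sum_comm' fun i j => by simp [ne_comm]

noncomputable def infoNCEPartition (x x' : ι → n → ℝ) (W : Matrix m n ℝ) (i : ι) : ℝ :=
  gaussPartition (univ.erase i) (fun j => x i - x j) (x i - x' i) W

noncomputable def infoNCELoss (x x' : ι → n → ℝ) (W : Matrix m n ℝ) : ℝ :=
  -∑ i, Real.log (gaussKernel (x i - x' i) W / infoNCEPartition x x' W i)

noncomputable def infoNCEWeight (x x' : ι → n → ℝ) (W : Matrix m n ℝ) (i j : ι) : ℝ :=
  if j = i then gaussKernel (x i - x' i) W / infoNCEPartition x x' W i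
  else gaussKernel (x i - x j) W / infoNCEPartition x x' W i

noncomputable def dataCovariance (x x' : ι → n → ℝ) (W : Matrix m n ℝ) : Matrix n n ℝ :=
  ∑ i, ∑ j ∈ univ.erase i, infoNCEWeight x x' W j i • vecMulVec (x i - x j) (x i - x j)

noncomputable def augmentationCovariance (x x' : ι → n → ℝ) (W : Matrix m n ℝ) : Matrix n n ℝ :=
  ∑ i, (1 - infoNCEWeight x x' W i i) • vecMulVec (x' i - x i) (x' i - x i)

variable (x x' : ι → n → ℝ) (W : Matrix m n ℝ)

theorem infoNCEWeight_nonneg (i j : ι) : 0 ≤ infoNCEWeight x x' W i j := by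
  have hZ := gaussPartition_pos (univ.erase i) (fun j => x i - x j) (x i - x' i) W
  unfold infoNCEWeight infoNCEPartition
  split_ifs <;> exact div_nonneg (gaussKernel_pos _ W).le hZ.le

theorem infoNCEWeight_self_le_one (i : ι) : infoNCEWeight x x' W i i ≤ 1 := by
  rw [infoNCEWeight, if_pos rfl, infoNCEPartition]
  exact div_le_one_of_le₀ (gaussKernel_le_gaussPartition _ _ _ W)
    (gaussPartition_pos _ _ _ W).le

theorem posSemidef_dataCovariance : (dataCovariance x x' W).PosSemidef :=
  posSemidef_sum _ fun i _ => posSemidef_sum _ fun j _ =>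
    posSemidef_smul_vecMulVec_self (infoNCEWeight_nonneg x x' W j i) _

theorem posSemidef_augmentationCovariance : (augmentationCovariance x x' W).PosSemidef :=
  posSemidef_sum _ fun i _ =>
    posSemidef_smul_vecMulVec_self (sub_nonneg.2 (infoNCEWeight_self_le_one x x' W i)) _

theorem sum_infoNCE_sample_gradient :
    ∑ i, ((1 - gaussKernel (x i - x' i) W / infoNCEPartition x x' W i) •
        vecMulVec (x i - x' i) (x i - x' i) -
      ∑ j ∈ univ.erase i, (gaussKernel (x i - x j) W / infoNCEPartition x x' W i) •
        vecMulVec (x i - x j) (x i - x j)) =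
      augmentationCovariance x x' W - dataCovariance x x' W := by
  rw [Finset.sum_sub_distrib, augmentationCovariance, dataCovariance, Finset.sum_sum_erase_comm]
  congr 1
  · refine Finset.sum_congr rfl fun i _ => ?_
    rw [infoNCEWeight, if_pos rfl, vecMulVec_sub_self_comm]
  · refine Finset.sum_congr rfl fun i _ => Finset.sum_congr rfl fun j hj => ?_
    rw [infoNCEWeight, if_neg (Finset.ne_of_mem_erase hj).symm, vecMulVec_sub_self_comm (x j)]

theorem hasMatrixGradientAt_infoNCELoss :
    HasMatrixGradientAt (infoNCELoss x x')
      (W * (augmentationCovariance x x' W - dataCovariance x x' W)) W := by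
  have hloss : infoNCELoss x x' = fun V : Matrix m n ℝ =>
      ∑ i, -Real.log (gaussKernel (x i - x' i) V / infoNCEPartition x x' V i) := by
    funext V
    rw [infoNCELoss, Finset.sum_neg_distrib]
  rw [hloss, ← sum_infoNCE_sample_gradient, Matrix.mul_sum]
  exact HasMatrixGradientAt.sum fun i _ =>
    hasMatrixGradientAt_neg_log_gaussKernel_div_gaussPartition _ _ _ W

end InfoNCE

theorem infoNCE_single_layer_gradient_general (N m n : ℕ)
    (x x' : Fin N → Fin n → ℝ)
    (z z' : Matrix (Fin m) (Fin n) ℝ → Fin N → Fin m → ℝ)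
    (hz : ∀ W i, z W i = W *ᵥ x i) (hz' : ∀ W i, z' W i = W *ᵥ x' i)
    (Z : Matrix (Fin m) (Fin n) ℝ → Fin N → ℝ)
    (hZ : ∀ W i, Z W i =
      (∑ j ∈ univ.erase i, Real.exp (-(∑ a, (z W i a - z W j a) ^ 2) / 2)) +
        Real.exp (-(∑ a, (z W i a - z' W i a) ^ 2) / 2))
    (L : Matrix (Fin m) (Fin n) ℝ → ℝ)
    (hL : L = fun W => -∑ i, Real.log
      (Real.exp (-(∑ a, (z W i a - z' W i a) ^ 2) / 2) / Z W i))
    (α : Matrix (Fin m) (Fin n) ℝ → Fin N → Fin N → ℝ)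
    (hα : ∀ W i j, α W i j =
      if j = i then Real.exp (-(∑ a, (z W i a - z' W i a) ^ 2) / 2) / Z W i
      else Real.exp (-(∑ a, (z W i a - z W j a) ^ 2) / 2) / Z W i)
    (S0 S1 : Matrix (Fin m) (Fin n) ℝ → Matrix (Fin n) (Fin n) ℝ)
    (hS0 : ∀ W, S0 W =
      ∑ i, ∑ j ∈ univ.erase i, α W j i • vecMulVec (x i - x j) (x i - x j))
    (hS1 : ∀ W, S1 W =
      ∑ i, (1 - α W i i) • vecMulVec (x' i - x i) (x' i - x i)) :
    Differentiable ℝ L ∧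
    (∀ W, (S0 W).PosSemidef ∧ (S1 W).PosSemidef) ∧
    (∀ W H, fderiv ℝ L W H =
      Matrix.trace ((-(W * (S0 W - S1 W)))ᵀ * H)) := by
  have hZ' (W : Matrix (Fin m) (Fin n) ℝ) (i : Fin N) : Z W i = infoNCEPartition x x' W i := by
    simp only [hZ, hz, hz', ← gaussKernel_sub]
    rfl
  obtain rfl : L = infoNCELoss x x' := by
    simp only [hL, hz, hz', ← gaussKernel_sub, hZ']
    rfl
  obtain rfl : α = infoNCEWeight x x' := by
    funext W i j
    simp only [hα, hz, hz', ← gaussKernel_sub, hZ']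
    rfl
  obtain rfl : S0 = dataCovariance x x' := funext hS0
  obtain rfl : S1 = augmentationCovariance x x' := funext hS1
  have hgrad (W : Matrix (Fin m) (Fin n) ℝ) := hasMatrixGradientAt_infoNCELoss x x' W
  refine ⟨fun W => (hgrad W).differentiableAt, fun W => ⟨posSemidef_dataCovariance x x' W,
    posSemidef_augmentationCovariance x x' W⟩, fun W H => ?_⟩
  rw [(hgrad W).fderiv_apply, ← Matrix.mul_neg, neg_sub]

/-- **Gradient of the InfoNCE loss of a single-layer linear model.**
With embeddings `z_i(W) = W x_i`, `z_i'(W) = W x_i'` (squared Euclidean norms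
written as sums of squares), InfoNCE loss
`L W = −∑ i log (exp(−‖z_i−z_i'‖²/2) / Z_i)`, and softmax weights `α`, the
loss `L` is differentiable and its Frobenius gradient satisfies
`∇L(W) = −W (Σ̂₀(W) − Σ̂₁(W))`, i.e. `fderiv ℝ L W H = tr((−W(Σ̂₀−Σ̂₁))ᵀ H)`,
where `Σ̂₀` (weighted data covariance) and `Σ̂₁` (weighted augmentation
covariance) are positive semidefinite.  In particular the gradient flow
`Ẇ = −∇L(W)` takes the form `Ẇ = W X(W)` with `X = Σ̂₀ − Σ̂₁` a difference of
two PSD matrices. -/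
theorem infoNCE_single_layer_gradient (N m n : ℕ) (hN : 2 ≤ N)
    (x x' : Fin N → Fin n → ℝ)
    (z z' : Matrix (Fin m) (Fin n) ℝ → Fin N → Fin m → ℝ)
    (hz : ∀ W i, z W i = W *ᵥ x i) (hz' : ∀ W i, z' W i = W *ᵥ x' i)
    (Z : Matrix (Fin m) (Fin n) ℝ → Fin N → ℝ)
    (hZ : ∀ W i, Z W i =
      (∑ j ∈ univ.erase i, Real.exp (-(∑ a, (z W i a - z W j a) ^ 2) / 2)) +
        Real.exp (-(∑ a, (z W i a - z' W i a) ^ 2) / 2))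
    (L : Matrix (Fin m) (Fin n) ℝ → ℝ)
    (hL : L = fun W => -∑ i, Real.log
      (Real.exp (-(∑ a, (z W i a - z' W i a) ^ 2) / 2) / Z W i))
    (α : Matrix (Fin m) (Fin n) ℝ → Fin N → Fin N → ℝ)
    (hα : ∀ W i j, α W i j =
      if j = i then Real.exp (-(∑ a, (z W i a - z' W i a) ^ 2) / 2) / Z W i
      else Real.exp (-(∑ a, (z W i a - z W j a) ^ 2) / 2) / Z W i)
    (S0 S1 : Matrix (Fin m) (Fin n) ℝ → Matrix (Fin n) (Fin n) ℝ)
    (hS0 : ∀ W, S0 W =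
      ∑ i, ∑ j ∈ univ.erase i, α W j i • vecMulVec (x i - x j) (x i - x j))
    (hS1 : ∀ W, S1 W =
      ∑ i, (1 - α W i i) • vecMulVec (x' i - x i) (x' i - x i)) :
    Differentiable ℝ L ∧
    (∀ W, (S0 W).PosSemidef ∧ (S1 W).PosSemidef) ∧
    (∀ W H, fderiv ℝ L W H =
      Matrix.trace ((-(W * (S0 W - S1 W)))ᵀ * H)) :=
  infoNCE_single_layer_gradient_general N m n x x' z z' hz hz' Z hZ L hL α hα S0 S1 hS0 hS1
end
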